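/- If σ⁺ and σ⁻ are independent random variables each following the standard Gumbel distribution (CDF F(x) = exp(-exp(-x))), and π ∈ (0,1), then P(log π + σ⁺ > log(1-π) + σ⁻) = π. -/

import Mathlib

/-!
The Gumbel law is the image of the uniform law on `(0,1)` under the quantile map
`u ↦ -log (-log u)`, and its CDF `F` satisfies `F (x + c) = F x ^ exp (-c)`. Conditioning on
`σ⁺`, the probability of the event is therefore `E[F(σ⁺)^a] = ∫₀¹ u^a du = 1/(a+1)` with
`a = (1-π)/π`, which is `π`.
-/

open MeasureTheory ProbabilityTheory Real Set

noncomputable section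

def gumbelCDF (x : ℝ) : ℝ := exp (-exp (-x))

def gumbelQuantile (u : ℝ) : ℝ := -log (-log u)

def gumbelMeasure : Measure ℝ := (volume.restrict (Ioo (0 : ℝ) 1)).map gumbelQuantile

lemma gumbelCDF_strictMono : StrictMono gumbelCDF := fun x y hxy => by
  unfold gumbelCDF
  gcongr

lemma gumbelCDF_lt_one (x : ℝ) : gumbelCDF x < 1 :=
  exp_lt_one_iff.2 (neg_lt_zero.2 (exp_pos _))

lemma gumbelCDF_gumbelQuantile {u : ℝ} (hu : u ∈ Ioo (0 : ℝ) 1) :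
    gumbelCDF (gumbelQuantile u) = u := by
  have hlog : 0 < -log u := neg_pos.2 (log_neg hu.1 hu.2)
  simp only [gumbelCDF, gumbelQuantile, neg_neg, exp_log hlog, exp_log hu.1]

lemma gumbelCDF_add (x c : ℝ) : gumbelCDF (x + c) = gumbelCDF x ^ exp (-c) := by
  rw [gumbelCDF, gumbelCDF, ← exp_mul, neg_add, exp_add]
  ring_nf

lemma gumbelQuantile_le_iff {u : ℝ} (hu : u ∈ Ioo (0 : ℝ) 1) (t : ℝ) :
    gumbelQuantile u ≤ t ↔ u ≤ gumbelCDF t := by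
  rw [← gumbelCDF_strictMono.le_iff_le, gumbelCDF_gumbelQuantile hu]

lemma gumbelQuantile_lt_iff {u : ℝ} (hu : u ∈ Ioo (0 : ℝ) 1) (t : ℝ) :
    gumbelQuantile u < t ↔ u < gumbelCDF t := by
  rw [← gumbelCDF_strictMono.lt_iff_lt, gumbelCDF_gumbelQuantile hu]

lemma measurable_gumbelQuantile : Measurable gumbelQuantile :=
  (measurable_log.comp measurable_log.neg).neg

instance : IsProbabilityMeasure gumbelMeasure :=
  have : IsProbabilityMeasure (volume.restrict (Ioo (0 : ℝ) 1)) := ⟨by simp⟩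
  Measure.isProbabilityMeasure_map measurable_gumbelQuantile.aemeasurable

lemma gumbelMeasure_Iic (t : ℝ) : gumbelMeasure (Iic t) = ENNReal.ofReal (gumbelCDF t) := by
  have hset : gumbelQuantile ⁻¹' Iic t ∩ Ioo 0 1 = Ioc 0 (gumbelCDF t) := by
    ext u
    simp only [mem_inter_iff, mem_preimage, mem_Iic, mem_Ioc]
    constructor
    · rintro ⟨hq, hu⟩
      exact ⟨hu.1, (gumbelQuantile_le_iff hu t).1 hq⟩
    · rintro ⟨hu0, hut⟩
      have hu : u ∈ Ioo (0 : ℝ) 1 := ⟨hu0, hut.trans_lt (gumbelCDF_lt_one t)⟩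
      exact ⟨(gumbelQuantile_le_iff hu t).2 hut, hu⟩
  rw [gumbelMeasure, Measure.map_apply measurable_gumbelQuantile measurableSet_Iic,
    Measure.restrict_apply (measurable_gumbelQuantile measurableSet_Iic), hset, volume_Ioc,
    sub_zero]

lemma gumbelMeasure_Iio (t : ℝ) : gumbelMeasure (Iio t) = ENNReal.ofReal (gumbelCDF t) := by
  have hset : gumbelQuantile ⁻¹' Iio t ∩ Ioo 0 1 = Ioo 0 (gumbelCDF t) := by
    ext u
    simp only [mem_inter_iff, mem_preimage, mem_Iio, mem_Ioo]
    constructor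
    · rintro ⟨hq, hu⟩
      exact ⟨hu.1, (gumbelQuantile_lt_iff hu t).1 hq⟩
    · rintro ⟨hu0, hut⟩
      have hu : u ∈ Ioo (0 : ℝ) 1 := ⟨hu0, hut.trans (gumbelCDF_lt_one t)⟩
      exact ⟨(gumbelQuantile_lt_iff hu t).2 hut, hu⟩
  rw [gumbelMeasure, Measure.map_apply measurable_gumbelQuantile measurableSet_Iio,
    Measure.restrict_apply (measurable_gumbelQuantile measurableSet_Iio), hset, volume_Ioo,
    sub_zero]

lemma map_eq_gumbelMeasure {Ω : Type*} [MeasurableSpace Ω] {μ : Measure Ω}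
    [IsProbabilityMeasure μ] {X : Ω → ℝ} (hX : Measurable X)
    (hcdf : ∀ x, μ {ω | X ω ≤ x} = ENNReal.ofReal (gumbelCDF x)) :
    μ.map X = gumbelMeasure := by
  have : IsProbabilityMeasure (μ.map X) := Measure.isProbabilityMeasure_map hX.aemeasurable
  refine Measure.ext_of_Iic _ _ fun t => ?_
  rw [Measure.map_apply hX measurableSet_Iic, gumbelMeasure_Iic]
  exact hcdf t

lemma lintegral_rpow_Ioo_zero_one {a : ℝ} (ha : -1 < a) :
    ∫⁻ u in Ioo (0 : ℝ) 1, ENNReal.ofReal (u ^ a) = ENNReal.ofReal (1 / (a + 1)) := by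
  have hint : IntegrableOn (fun u : ℝ => u ^ a) (Ioo 0 1) :=
    ((intervalIntegral.intervalIntegrable_rpow' ha).1).mono_set Ioo_subset_Ioc_self
  rw [← ofReal_integral_eq_lintegral_ofReal hint
    ((ae_restrict_iff' measurableSet_Ioo).2 (.of_forall fun u hu => rpow_nonneg hu.1.le a)),
    ← integral_Ioc_eq_integral_Ioo, ← intervalIntegral.integral_of_le zero_le_one,
    integral_rpow (.inl ha), one_rpow, zero_rpow (by linarith)]
  simp

lemma lintegral_gumbelCDF_add (c : ℝ) :
    ∫⁻ x, ENNReal.ofReal (gumbelCDF (x + c)) ∂gumbelMeasure =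
      ENNReal.ofReal (1 / (exp (-c) + 1)) := by
  rw [gumbelMeasure, lintegral_map (by unfold gumbelCDF; fun_prop) measurable_gumbelQuantile,
    ← lintegral_rpow_Ioo_zero_one (by linarith [exp_pos (-c)] : -1 < exp (-c))]
  refine setLIntegral_congr_fun measurableSet_Ioo fun u hu => ?_
  rw [gumbelCDF_add, gumbelCDF_gumbelQuantile hu]

lemma measure_lt_add_eq_lintegral {Ω : Type*} [MeasurableSpace Ω] {μ : Measure Ω}
    [IsFiniteMeasure μ] {X Y : Ω → ℝ} (hX : Measurable X) (hY : Measurable Y)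
    (hXY : IndepFun X Y μ) (c : ℝ) :
    μ {ω | Y ω < X ω + c} = ∫⁻ x, μ.map Y (Iio (x + c)) ∂μ.map X := by
  have hS : MeasurableSet {q : ℝ × ℝ | q.2 < q.1 + c} :=
    measurableSet_lt (by fun_prop) (by fun_prop)
  change μ ((fun ω => (X ω, Y ω)) ⁻¹' {q : ℝ × ℝ | q.2 < q.1 + c}) = _
  rw [← Measure.map_apply (hX.prodMk hY) hS,
    (indepFun_iff_map_prod_eq_prod_map_map hX.aemeasurable hY.aemeasurable).1 hXY,
    Measure.prod_apply hS]
  rfl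

end

/-- Gumbel trick (binary case): if `σp, σm` are independent standard Gumbel random
variables (CDF `exp (-exp (-x))`) and `p ∈ (0,1)`, then
`P(log p + σp > log (1-p) + σm) = p`. -/
theorem gumbel_binary_trick {Ω : Type*} [MeasureSpace Ω]
    [IsProbabilityMeasure (volume : Measure Ω)]
    (σp σm : Ω → ℝ) (hσp : Measurable σp) (hσm : Measurable σm)
    (hindep : ProbabilityTheory.IndepFun σp σm volume)
    (hcdfp : ∀ x : ℝ, volume {ω | σp ω ≤ x} = ENNReal.ofReal (Real.exp (-Real.exp (-x))))
    (hcdfm : ∀ x : ℝ, volume {ω | σm ω ≤ x} = ENNReal.ofReal (Real.exp (-Real.exp (-x))))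
    (p : ℝ) (hp : p ∈ Set.Ioo (0 : ℝ) 1) :
    volume {ω | Real.log (1 - p) + σm ω < Real.log p + σp ω} = ENNReal.ofReal p := by
  obtain ⟨hp0, hp1⟩ := hp
  set c := log p - log (1 - p)
  have hevent : {ω | log (1 - p) + σm ω < log p + σp ω} = {ω | σm ω < σp ω + c} := by
    ext ω
    simp only [mem_ofPred_eq, c]
    constructor <;> intro h <;> linarith
  have hc : 1 / (exp (-c) + 1) = p := by
    rw [neg_sub, exp_sub, exp_log (by linarith), exp_log hp0]
    field_simp
    ring
  rw [hevent, measure_lt_add_eq_lintegral hσp hσm hindep, map_eq_gumbelMeasure hσp hcdfp,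
    map_eq_gumbelMeasure hσm hcdfm]
  simp_rw [gumbelMeasure_Iio]
  rw [lintegral_gumbelCDF_add, hc]
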